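/- arXiv:2511.10340 — 2 statements merged into one kernel-verified Lean document; each statement's English description precedes it below -/
import Mathlib

section
/- If D : ℝ^d → ℝ^d is L-Lipschitz, G is a random variable taking values in affine isometries of ℝ^d (with integrable action), and the equivariant map is defined by D̃(x) = E[J_G^T D(G(x))] where J_G is the linear part of G (so J_G^T = J_G⁻¹), then D̃ is L-Lipschitz. -/
open MeasureTheory

theorem stmt2 {d : ℕ} {Ω : Type*} [MeasurableSpace Ω] (μ : Measure Ω)
    [IsProbabilityMeasure μ]
    (L : ℝ) (hL : 0 ≤ L)
    (D : EuclideanSpace ℝ (Fin d) → EuclideanSpace ℝ (Fin d))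
    (hD : ∀ x y, ‖D x - D y‖ ≤ L * ‖x - y‖)
    (A : Ω → (EuclideanSpace ℝ (Fin d) ≃ₗᵢ[ℝ] EuclideanSpace ℝ (Fin d)))
    (C : Ω → EuclideanSpace ℝ (Fin d))
    (hint : ∀ x, Integrable (fun ω => (A ω).symm (D (A ω x + C ω))) μ)
    (Dtil : EuclideanSpace ℝ (Fin d) → EuclideanSpace ℝ (Fin d))
    (hDtil : ∀ x, Dtil x = ∫ ω, (A ω).symm (D (A ω x + C ω)) ∂μ) :
    ∀ x y, ‖Dtil x - Dtil y‖ ≤ L * ‖x - y‖ := by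
  intro x y
  rw [hDtil x, hDtil y, ← integral_sub (hint x) (hint y)]
  have key : ∀ ω, ‖(A ω).symm (D (A ω x + C ω)) - (A ω).symm (D (A ω y + C ω))‖
      ≤ L * ‖x - y‖ := by
    intro ω
    rw [← map_sub, (A ω).symm.norm_map]
    calc ‖D (A ω x + C ω) - D (A ω y + C ω)‖ ≤ L * ‖(A ω x + C ω) - (A ω y + C ω)‖ :=
          hD _ _
      _ = L * ‖x - y‖ := by
          rw [add_sub_add_comm, sub_self, add_zero, ← map_sub, (A ω).norm_map]
  calc ‖∫ ω, ((A ω).symm (D (A ω x + C ω)) - (A ω).symm (D (A ω y + C ω))) ∂μ‖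
      ≤ ∫ ω, ‖(A ω).symm (D (A ω x + C ω)) - (A ω).symm (D (A ω y + C ω))‖ ∂μ :=
        norm_integral_le_integral_norm _
    _ ≤ ∫ _ω, L * ‖x - y‖ ∂μ := by
        apply integral_mono_of_nonneg
        · filter_upwards with ω using norm_nonneg _
        · exact integrable_const _
        · filter_upwards with ω using key ω
    _ = L * ‖x - y‖ := by simp
end

section
/- Let f : ℝ^d → ℝ be differentiable with L_f-Lipschitz gradient, g : ℝ^d → ℝ differentiable and ρ-weakly convex, λ > 0. For fixed x and w ∈ ℝ^d, set x⁺ = Prox_g(x − w/λ) (satisfying x⁺ − x + w/λ + ∇g(x⁺) = 0), and F = f + λg. Then F(x⁺) ≤ F(x) + (L_f/2 + ρλ/2 − λ)‖x⁺ − x‖² + ⟨w − ∇f(x), x − x⁺⟩. -/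
/-!
Smoothness of `f` gives the descent bound
`f x⁺ ≤ f x + ⟪∇f x, x⁺ - x⟫ + (L_f/2)‖x⁺ - x‖²`. Weak convexity of `g`, i.e. convexity of
`g + (ρ/2)‖·‖²`, gives `⟪∇g x⁺, x - x⁺⟫ ≤ g x - g x⁺ + (ρ/2)‖x - x⁺‖²`, and the stationarity
condition turns `λ ⟪∇g x⁺, x - x⁺⟫` into `λ‖x - x⁺‖² - ⟪w, x - x⁺⟫`. Adding the first
inequality to `λ` times the second gives the claim.
-/

open Set InnerProductSpace

theorem ConvexOn.le_sub_of_hasDerivAt_add_smul {E : Type*} [AddCommGroup E] [Module ℝ E]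
    {φ : E → ℝ} (hφ : ConvexOn ℝ univ φ) {x v : E} {φ' : ℝ}
    (h : HasDerivAt (fun t : ℝ => φ (x + t • v)) φ' 0) : φ' ≤ φ (x + v) - φ x := by
  have hline : ConvexOn ℝ univ (fun t : ℝ => φ (x + t • v)) := by
    have hcomp : φ ∘ AffineMap.lineMap x (x + v) = fun t : ℝ => φ (x + t • v) := by
      ext t
      simp [AffineMap.lineMap_apply_module', add_comm]
    simpa [hcomp] using hφ.comp_affineMap (AffineMap.lineMap x (x + v))
  simpa [slope_def_field] using hline.le_slope_of_hasDerivAt (mem_univ 0) (mem_univ 1) one_pos h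

variable {E : Type*} [NormedAddCommGroup E] [InnerProductSpace ℝ E] [CompleteSpace E]

theorem HasGradientAt.hasDerivAt_add_smul {f : E → ℝ} {f' x v : E} {t : ℝ}
    (hf : HasGradientAt f f' (x + t • v)) :
    HasDerivAt (fun s : ℝ => f (x + s • v)) ⟪f', v⟫_ℝ t := by
  have hline : HasDerivAt (fun s : ℝ => x + s • v) v t := by
    simpa using ((hasDerivAt_id t).smul_const v).const_add x
  have := (hasGradientAt_iff_hasFDerivAt.mp hf).comp_hasDerivAt t hline
  rwa [toDual_apply_apply] at this

theorem image_add_le_of_lipschitz_gradient {f : E → ℝ} {L : ℝ} (hf : Differentiable ℝ f)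
    (hLip : ∀ a b, ‖gradient f a - gradient f b‖ ≤ L * ‖a - b‖) (x v : E) :
    f (x + v) ≤ f x + ⟪gradient f x, v⟫_ℝ + L / 2 * ‖v‖ ^ 2 := by
  set φ : ℝ → ℝ := fun t => f (x + t • v) - t * ⟪gradient f x, v⟫_ℝ - L / 2 * ‖v‖ ^ 2 * t ^ 2
  have hφ (t : ℝ) :
      HasDerivAt φ (⟪gradient f (x + t • v) - gradient f x, v⟫_ℝ - L * ‖v‖ ^ 2 * t) t := by
    have := (((hf _).hasGradientAt.hasDerivAt_add_smul (x := x) (v := v)).sub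
      ((hasDerivAt_id t).mul_const ⟪gradient f x, v⟫_ℝ)).sub
      ((hasDerivAt_pow 2 t).const_mul (L / 2 * ‖v‖ ^ 2))
    refine this.congr_deriv ?_
    rw [inner_sub_left]
    ring
  have hslope (t : ℝ) (ht : 0 ≤ t) :
      ⟪gradient f (x + t • v) - gradient f x, v⟫_ℝ ≤ L * ‖v‖ ^ 2 * t :=
    calc _ ≤ ‖gradient f (x + t • v) - gradient f x‖ * ‖v‖ := real_inner_le_norm _ _
      _ ≤ L * ‖t • v‖ * ‖v‖ := by gcongr; simpa using hLip (x + t • v) x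
      _ = _ := by rw [norm_smul, Real.norm_of_nonneg ht]; ring
  have hanti : AntitoneOn φ (Ici 0) :=
    antitoneOn_of_hasDerivWithinAt_nonpos (convex_Ici 0)
      (fun t _ => (hφ t).continuousAt.continuousWithinAt) (fun t _ => (hφ t).hasDerivWithinAt)
      (fun t ht => by rw [interior_Ici] at ht; linarith [hslope t ht.le])
  have := hanti (mem_Ici.2 le_rfl) (mem_Ici.2 zero_le_one) zero_le_one
  simp only [φ, zero_smul, one_smul, add_zero, zero_mul, one_mul, sub_zero, mul_one, one_pow,
    zero_pow two_ne_zero] at this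
  linarith

theorem inner_gradient_le_of_convexOn_add_sq {g : E → ℝ} {ρ : ℝ}
    (hconv : ConvexOn ℝ univ (fun z => g z + ρ / 2 * ‖z‖ ^ 2)) {x : E}
    (hg : DifferentiableAt ℝ g x) (y : E) :
    ⟪gradient g x, y - x⟫_ℝ ≤ g y - g x + ρ / 2 * ‖y - x‖ ^ 2 := by
  have hline : HasDerivAt (fun t : ℝ => x + t • (y - x)) (y - x) 0 := by
    simpa using ((hasDerivAt_id (0 : ℝ)).smul_const (y - x)).const_add x
  have hgline : HasDerivAt (fun t : ℝ => g (x + t • (y - x))) ⟪gradient g x, y - x⟫_ℝ 0 :=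
    HasGradientAt.hasDerivAt_add_smul (by simpa using hg.hasGradientAt)
  have := hconv.le_sub_of_hasDerivAt_add_smul (hgline.add (hline.norm_sq.const_mul (ρ / 2)))
  have hnorm : ‖y‖ ^ 2 = ‖x‖ ^ 2 + 2 * ⟪x, y - x⟫_ℝ + ‖y - x‖ ^ 2 := by
    rw [← norm_add_sq_real, add_sub_cancel]
  rw [zero_smul, add_zero, add_sub_cancel, hnorm] at this
  linarith

theorem stmt16_general {d : ℕ} (Lf ρ lam : ℝ) (hlam : 0 < lam)
    (f g : EuclideanSpace ℝ (Fin d) → ℝ)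
    (hf : Differentiable ℝ f) (hg : Differentiable ℝ g)
    (hLip : ∀ a b, ‖gradient f a - gradient f b‖ ≤ Lf * ‖a - b‖)
    (hconv : ConvexOn ℝ Set.univ (fun z => g z + ρ / 2 * ‖z‖ ^ 2))
    (x w xp : EuclideanSpace ℝ (Fin d))
    (hstat : xp - x + (1 / lam) • w + gradient g xp = 0)
    (F : EuclideanSpace ℝ (Fin d) → ℝ) (hF : ∀ z, F z = f z + lam * g z) :
    F xp ≤ F x + (Lf / 2 + ρ * lam / 2 - lam) * ‖xp - x‖ ^ 2
      + (inner ℝ (w - gradient f x) (x - xp) : ℝ) := by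
  have hdescent := image_add_le_of_lipschitz_gradient hf hLip x (xp - x)
  rw [add_sub_cancel, ← neg_sub x xp, inner_neg_right, norm_neg] at hdescent
  have hweak := inner_gradient_le_of_convexOn_add_sq hconv (hg xp) x
  have hgrad : gradient g xp = (x - xp) - (1 / lam) • w := by
    linear_combination (norm := module) hstat
  have hscaled : lam * ⟪gradient g xp, x - xp⟫_ℝ = lam * ‖x - xp‖ ^ 2 - ⟪w, x - xp⟫_ℝ := by
    rw [hgrad, inner_sub_left, real_inner_smul_left, real_inner_self_eq_norm_sq]
    field_simp
  rw [hF, hF, inner_sub_left, norm_sub_rev]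
  linarith [mul_le_mul_of_nonneg_left hweak hlam.le]

theorem stmt16 {d : ℕ} (Lf ρ lam : ℝ) (hLf : 0 ≤ Lf) (hlam : 0 < lam)
    (f g : EuclideanSpace ℝ (Fin d) → ℝ)
    (hf : Differentiable ℝ f) (hg : Differentiable ℝ g)
    (hLip : ∀ a b, ‖gradient f a - gradient f b‖ ≤ Lf * ‖a - b‖)
    (hconv : ConvexOn ℝ Set.univ (fun z => g z + ρ / 2 * ‖z‖ ^ 2))
    (x w xp : EuclideanSpace ℝ (Fin d))
    (hstat : xp - x + (1 / lam) • w + gradient g xp = 0)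
    (F : EuclideanSpace ℝ (Fin d) → ℝ) (hF : ∀ z, F z = f z + lam * g z) :
    F xp ≤ F x + (Lf / 2 + ρ * lam / 2 - lam) * ‖xp - x‖ ^ 2
      + (inner ℝ (w - gradient f x) (x - xp) : ℝ) :=
  stmt16_general Lf ρ lam hlam f g hf hg hLip hconv x w xp hstat F hF
end
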